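/- arXiv:2007.05669 — 2 statements merged into one kernel-verified Lean document; each statement's English description precedes it below -/
import Mathlib

section
/- The Catalan numbers are asymptotically equivalent to (1/√π)·n^{−3/2}·4^n, i.e., lim_{n→∞} c_n / ((1/√π) n^{−3/2} 4^n) = 1. -/
open Filter Real

/-- The `n`-th Catalan number `(2n choose n)/(n+1)`, as a real number. -/
noncomputable def catalanR (n : ℕ) : ℝ := (Nat.choose (2 * n) n : ℝ) / (n + 1)

open scoped Nat Topology

/-! Since `stirlingSeq n = n! / (√(2n) (n/e)^n)` tends to `√π`, the quotient
`stirlingSeq (2n) / stirlingSeq n ^ 2 = binom(2n,n) √n / 4^n` tends to `1/√π`;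
dividing by `n + 1 ~ n` gives the asymptotics of `c_n`. -/

theorem Stirling.stirlingSeq_two_mul_div_sq (n : ℕ) :
    Stirling.stirlingSeq (2 * n) / Stirling.stirlingSeq n ^ 2
      = n.centralBinom * √n / 4 ^ n := by
  rcases n.eq_zero_or_pos with rfl | hn
  · simp [Stirling.stirlingSeq_zero]
  have hfac : ((2 * n)! : ℝ) = n.centralBinom * n ! * n ! := by
    have h := Nat.choose_mul_factorial_mul_factorial (Nat.le_mul_of_pos_left n two_pos)
    rw [two_mul, Nat.add_sub_cancel, ← two_mul, ← Nat.centralBinom_eq_two_mul_choose] at h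
    exact_mod_cast h.symm
  have hsqrt : √(2 * (2 * n : ℕ) : ℝ) = √2 * √2 * √n := by
    rw [← sqrt_mul zero_le_two, ← sqrt_mul (by positivity)]; push_cast; ring_nf
  have hpow : ((2 * n : ℕ) / exp 1 : ℝ) ^ (2 * n) = 4 ^ n * ((n : ℝ) / exp 1) ^ (2 * n) := by
    rw [pow_mul, pow_mul, ← mul_pow]; push_cast; ring
  have : (0 : ℝ) < n := by exact_mod_cast hn
  simp only [Stirling.stirlingSeq, hfac, hsqrt, hpow, sqrt_mul zero_le_two (n : ℝ)]
  field_simp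
  ring

theorem tendsto_centralBinom_mul_sqrt_div_four_pow :
    Tendsto (fun n : ℕ => n.centralBinom * √n / 4 ^ n) atTop (𝓝 (1 / √π)) := by
  have hpi : √π ≠ 0 := (sqrt_pos.2 pi_pos).ne'
  have h := (Stirling.tendsto_stirlingSeq_sqrt_pi.comp (tendsto_id.const_mul_atTop' two_pos)).div
    (Stirling.tendsto_stirlingSeq_sqrt_pi.pow 2) (pow_ne_zero 2 hpi)
  convert h using 1
  · ext n; exact (Stirling.stirlingSeq_two_mul_div_sq n).symm
  · field_simp

theorem catalanR_div_eq_centralBinom_ratio (n : ℕ) :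
    catalanR n / ((1 / √π) * (n : ℝ) ^ (-(3 : ℝ) / 2) * 4 ^ n)
      = √π * (n.centralBinom * √n / 4 ^ n) * (n / (n + 1)) := by
  rcases n.eq_zero_or_pos with rfl | hn
  · simp
  have : (0 : ℝ) < n := by exact_mod_cast hn
  have hrpow : (n : ℝ) ^ (-(3 : ℝ) / 2) = (n * √n)⁻¹ := by
    rw [show -(3 : ℝ) / 2 = -(1 + 1 / 2) by norm_num, rpow_neg this.le, rpow_add this,
      rpow_one, ← sqrt_eq_rpow]
  rw [catalanR, hrpow, Nat.centralBinom_eq_two_mul_choose]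
  field_simp

theorem catalan_asymptotics :
    Tendsto
      (fun n : ℕ =>
        catalanR n / ((1 / Real.sqrt π) * (n : ℝ) ^ (-(3 : ℝ) / 2) * 4 ^ n))
      atTop (nhds 1) := by
  have h := (tendsto_centralBinom_mul_sqrt_div_four_pow.const_mul √π).mul
    (tendsto_natCast_div_add_atTop (1 : ℝ))
  rw [mul_one_div_cancel (sqrt_pos.2 pi_pos).ne', one_mul] at h
  simpa only [catalanR_div_eq_centralBinom_ratio] using h
end

section
/- A Dyck path w strongly contains uudd if and only if the planar rooted tree T_p(w) has a vertex of depth at least 2, i.e., T_p(w) has height ≥ 2. -/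
/-- `true` represents `u`, `false` represents `d`. -/
def IsDyck (w : List Bool) : Prop :=
  w.count true = w.count false ∧ ∀ p : List Bool, p <+: w → p.count false ≤ p.count true

/-- In the standard stack parsing of a word `w`, the `d` at position `j` matches
the `u` at position `i` iff `i < j`, the letters are `u` and `d` respectively, and
the segment strictly between them is itself a Dyck word. -/
def Matched (w : List Bool) (i j : ℕ) : Prop :=
  i < j ∧ j < w.length ∧ w[i]? = some true ∧ w[j]? = some false ∧
    IsDyck ((w.drop (i + 1)).take (j - i - 1))

/-- `w` strongly contains `uudd`: there are positions `i < j < k < l` carrying the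
letters `u,u,d,d`, such that `k` matches `j` and `l` matches `i`. -/
def StronglyContainsUUDD (w : List Bool) : Prop :=
  ∃ i j k l : ℕ, i < j ∧ j < k ∧ k < l ∧ Matched w j k ∧ Matched w i l

namespace SCAux

/-- Height of prefix of length `n`. -/
def H (w : List Bool) (n : ℕ) : ℤ :=
  ((w.take n).count true : ℤ) - ((w.take n).count false : ℤ)

lemma H_zero (w : List Bool) : H w 0 = 0 := by simp [H]

lemma H_seg (w : List Bool) (a t : ℕ) :
    H w (a + t) = H w a +
      ((((w.drop a).take t).count true : ℤ) - (((w.drop a).take t).count false : ℤ)) := by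
  simp only [H, List.take_add, List.count_append]
  push_cast
  ring

lemma H_true (w : List Bool) (n : ℕ) (h : w[n]? = some true) :
    H w (n+1) = H w n + 1 := by
  simp only [H, List.take_succ] at *
  rw [h]
  simp
  ring

lemma H_false (w : List Bool) (n : ℕ) (h : w[n]? = some false) :
    H w (n+1) = H w n - 1 := by
  simp only [H, List.take_succ] at *
  rw [h]
  simp
  ring

lemma H_stable (w : List Bool) (n : ℕ) (h : w[n]? = none) :
    H w (n+1) = H w n := by
  simp only [H, List.take_succ] at *
  rw [h]
  simp

lemma step (w : List Bool) (n : ℕ) : H w (n+1) = H w n ∨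
    (w[n]? = some true ∧ H w (n+1) = H w n + 1) ∨
    (w[n]? = some false ∧ H w (n+1) = H w n - 1) := by
  cases h : w[n]? with
  | none => exact Or.inl (H_stable w n h)
  | some b =>
    cases b with
    | true => exact Or.inr (Or.inl ⟨rfl, H_true w n h⟩)
    | false => exact Or.inr (Or.inr ⟨rfl, H_false w n h⟩)

lemma get?_lt (w : List Bool) (n : ℕ) (b : Bool) (h : w[n]? = some b) : n < w.length := by
  exact (List.getElem?_eq_some_iff.mp h).1

lemma H_nonneg (w : List Bool) (hw : IsDyck w) (n : ℕ) : 0 ≤ H w n := by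
  have := hw.2 (w.take n) (List.take_prefix n w)
  simp only [H]
  omega

lemma H_length (w : List Bool) (hw : IsDyck w) : H w w.length = 0 := by
  have := hw.1
  simp only [H, List.take_length]
  omega

/-- From a Dyck segment: prefix heights stay above the base. -/
lemma seg_le (w : List Bool) (a m t : ℕ) (hd : IsDyck ((w.drop a).take m)) (ht : t ≤ m) :
    H w a ≤ H w (a + t) := by
  have hp := hd.2 (((w.drop a).take m).take t) (List.take_prefix t _)
  rw [List.take_take, min_eq_left ht] at hp
  rw [H_seg w a t]
  omega

lemma seg_total (w : List Bool) (a m : ℕ) (hd : IsDyck ((w.drop a).take m)) :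
    H w (a + m) = H w a := by
  have := hd.1
  rw [H_seg w a m]
  omega

/-- Converse: heights give a Dyck segment. -/
lemma seg_isDyck (w : List Bool) (a m : ℕ) (h0 : H w (a + m) = H w a)
    (hp : ∀ t ≤ m, H w a ≤ H w (a + t)) : IsDyck ((w.drop a).take m) := by
  constructor
  · have := H_seg w a m
    omega
  · intro p hpre
    have hlen : p.length ≤ m := by
      have := hpre.length_le
      simp only [List.length_take] at this
      omega
    have hpeq := List.prefix_iff_eq_take.mp hpre
    rw [List.take_take, min_eq_left hlen] at hpeq
    have key := hp p.length hlen
    rw [H_seg w a p.length] at key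
    have hcnt : ((w.drop a).take p.length).count false ≤
        ((w.drop a).take p.length).count true := by omega
    rwa [← hpeq] at hcnt

end SCAux

open SCAux in
/-- A Dyck path strongly contains `uudd` iff its associated planar rooted tree has
height at least `2`, i.e. some prefix has at least two more `u`'s than `d`'s. -/
theorem stronglyContainsUUDD_iff_height_ge_two (w : List Bool) (hw : IsDyck w) :
    StronglyContainsUUDD w ↔
      ∃ p : List Bool, p <+: w ∧ p.count false + 2 ≤ p.count true := by
  constructor
  · rintro ⟨i, j, k, l, hij, hjk, hkl, hm1, hm2⟩
    refine ⟨w.take (j+1), List.take_prefix _ _, ?_⟩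
    have h1 : H w (i+1) = H w i + 1 := H_true w i hm2.2.2.1
    have h2 : H w (j+1) = H w j + 1 := H_true w j hm1.2.2.1
    have h0 : 0 ≤ H w i := H_nonneg w hw i
    have h3 : H w (i+1) ≤ H w (i + 1 + (j - i - 1)) :=
      seg_le w (i+1) (l - i - 1) (j - i - 1) hm2.2.2.2.2 (by omega)
    have he : i + 1 + (j - i - 1) = j := by omega
    rw [he] at h3
    have : 2 ≤ H w (j+1) := by omega
    simp only [H] at this
    omega
  · rintro ⟨p, hp, hc⟩
    have hn : 2 ≤ H w p.length := by
      have := List.prefix_iff_eq_take.mp hp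
      simp only [H, ← this]
      omega
    -- j : first index where height jumps to ≥ 2
    have hex : ∃ m, 2 ≤ H w m := ⟨p.length, hn⟩
    obtain ⟨m, hm2, hmin⟩ : ∃ m, 2 ≤ H w m ∧ ∀ t < m, H w t < 2 :=
      ⟨Nat.find hex, Nat.find_spec hex, fun t ht => by
        have := Nat.find_min hex ht; omega⟩
    have hm0 : m ≠ 0 := by
      intro h
      rw [h, H_zero] at hm2
      omega
    obtain ⟨j, rfl⟩ : ∃ j, m = j + 1 := ⟨m - 1, by omega⟩
    have hj_lt : H w j < 2 := hmin j (by omega)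
    have hstepj := step w j
    have hjget : w[j]? = some true ∧ H w (j+1) = H w j + 1 := by
      rcases hstepj with h | h | ⟨_, h⟩ <;> first | omega | exact h
    have hHj : H w j = 1 ∧ H w (j+1) = 2 := by
      have hge1 : 1 ≤ H w j := by omega
      constructor <;> omega
    have hjlen : j < w.length := get?_lt w j true hjget.1
    -- i : last index ≤ j with height 0
    set i := Nat.findGreatest (fun t => H w t ≤ 0) j with hi_def
    have hi0 : H w i = 0 := by
      have hspec : H w i ≤ 0 :=
        Nat.findGreatest_spec (P := fun t => H w t ≤ 0) (m := 0) (Nat.zero_le j) (by show H w 0 ≤ 0; rw [H_zero])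
      have := H_nonneg w hw i
      omega
    have hile : i ≤ j := Nat.findGreatest_le j
    have hgt : ∀ t, i < t → t ≤ j → 1 ≤ H w t := fun t h1 h2 => by
      have : ¬ (H w t ≤ 0) := Nat.findGreatest_is_greatest h1 h2
      omega
    have hij : i < j := by
      rcases lt_or_eq_of_le hile with h | h
      · exact h
      · rw [h] at hi0; omega
    have hi1 : 1 ≤ H w (i+1) := hgt (i+1) (by omega) (by omega)
    have higet : w[i]? = some true ∧ H w (i+1) = H w i + 1 := by
      rcases step w i with h | h | ⟨_, h⟩ <;> first | omega | exact h
    have hHi1 : H w (i+1) = 1 := by omega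
    -- l : first index ≥ j whose next height is 0
    have hlex : ∃ t, j ≤ t ∧ H w (t+1) ≤ 0 := by
      refine ⟨w.length - 1, by omega, ?_⟩
      have : w.length - 1 + 1 = w.length := by omega
      rw [this, H_length w hw]
    obtain ⟨l, hl, hlmin, hlle⟩ : ∃ l, (j ≤ l ∧ H w (l+1) ≤ 0) ∧
        (∀ t, j ≤ t → t < l → 1 ≤ H w (t+1)) ∧ (∀ t, j ≤ t → H w (t+1) ≤ 0 → l ≤ t) :=
      ⟨Nat.find hlex, Nat.find_spec hlex, fun t h1 h2 => by
        have := Nat.find_min hlex h2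
        have := H_nonneg w hw (t+1)
        omega, fun t h1 h2 => Nat.find_min' hlex ⟨h1, h2⟩⟩
    have hjl : j < l := by
      rcases lt_or_eq_of_le hl.1 with h | h
      · exact h
      · rw [← h] at hl; omega
    have hHl : 1 ≤ H w l := by
      have := hlmin (l-1) (by omega) (by omega)
      have he : l - 1 + 1 = l := by omega
      rwa [he] at this
    have hlget : w[l]? = some false ∧ H w (l+1) = H w l - 1 := by
      have h0 := H_nonneg w hw (l+1)
      rcases step w l with h | ⟨_, h⟩ | h <;> first | omega | exact h
    have hHl1 : H w l = 1 ∧ H w (l+1) = 0 := by omega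
    have hllen : l < w.length := get?_lt w l false hlget.1
    -- k : first index ≥ j whose next height is ≤ 1
    have hkex : ∃ t, j ≤ t ∧ H w (t+1) ≤ 1 := ⟨l, hl.1, by omega⟩
    obtain ⟨k, hk, hkmin, hkle⟩ : ∃ k, (j ≤ k ∧ H w (k+1) ≤ 1) ∧
        (∀ t, j ≤ t → t < k → 2 ≤ H w (t+1)) ∧ k ≤ l :=
      ⟨Nat.find hkex, Nat.find_spec hkex, fun t h1 h2 => by
        have := Nat.find_min hkex h2; omega, Nat.find_min' hkex ⟨hl.1, by omega⟩⟩
    have hjk : j < k := by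
      rcases lt_or_eq_of_le hk.1 with h | h
      · exact h
      · rw [← h] at hk; omega
    have hHk : 2 ≤ H w k := by
      have := hkmin (k-1) (by omega) (by omega)
      have he : k - 1 + 1 = k := by omega
      rwa [he] at this
    have hkget : w[k]? = some false ∧ H w (k+1) = H w k - 1 := by
      rcases step w k with h | ⟨_, h⟩ | h <;> first | omega | exact h
    have hHk1 : H w k = 2 ∧ H w (k+1) = 1 := by omega
    have hkl : k < l := by
      rcases lt_or_eq_of_le hkle with h | h
      · exact h
      · rw [h] at hHk1; omega
    have hklen : k < w.length := by omega
    -- assemble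
    refine ⟨i, j, k, l, hij, hjk, hkl, ?_, ?_⟩
    · refine ⟨hjk, hklen, hjget.1, hkget.1, seg_isDyck w (j+1) (k - j - 1) ?_ ?_⟩
      · have he : j + 1 + (k - j - 1) = k := by omega
        rw [he]
        omega
      · intro t ht
        rcases Nat.eq_zero_or_pos t with h0 | h0
        · simp [h0]
        · have he : j + 1 + t = (j + t) + 1 := by omega
          rw [he]
          have := hkmin (j + t) (by omega) (by omega)
          omega
    · refine ⟨by omega, hllen, higet.1, hlget.1, seg_isDyck w (i+1) (l - i - 1) ?_ ?_⟩
      · have he : i + 1 + (l - i - 1) = l := by omega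
        rw [he]
        omega
      · intro t ht
        by_cases hc2 : i + 1 + t ≤ j
        · have := hgt (i + 1 + t) (by omega) hc2
          omega
        · have he : i + 1 + t = (i + t) + 1 := by omega
          rw [he]
          have := hlmin (i + t) (by omega) (by omega)
          omega
end
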